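/- Let n ≥ 2, let c : Fin n → ℝ have pairwise distinct entries, and let s be the permutation of Fin n with c_{s_1} < c_{s_2} < ⋯ < c_{s_n}. Let y : Fin n → ℝ satisfy y_i ≥ 0 for all i and Σ_i y_i ≤ 1, set λ = 1 − Σ_i y_i, and let 0 ≤ ε < 2. If y* is an optimal solution of the modified gradient redirection problem and y*_{s_1} ≠ 0, then y*_{s_t} = y_{s_t} for every t with 1 < t < n. -/
import Mathlib

lemma perturb_contra {n : ℕ} (c y ystar : Fin n → ℝ) (ε : ℝ)
    (h0 : ∀ i, 0 ≤ ystar i) (h1 : ∑ i, ystar i = 1)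
    (h2 : (∑ i, |ystar i - y i|) + (1 - ∑ i, y i) ≤ ε)
    (hopt : ∀ w : Fin n → ℝ, (∀ i, 0 ≤ w i) → (∑ i, w i = 1) →
      (∑ i, |w i - y i|) + (1 - ∑ i, y i) ≤ ε →
      ∑ i, c i * w i ≤ ∑ i, c i * ystar i)
    (a b : Fin n) (hab : a ≠ b) (δ : ℝ) (hδ : 0 < δ) (hcab : c a < c b)
    (ha0 : 0 ≤ ystar a - δ)
    (habs : |ystar a - δ - y a| + |ystar b + δ - y b| ≤ |ystar a - y a| + |ystar b - y b|) :
    False := by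
  set w : Fin n → ℝ := fun i => ystar i + (if i = b then δ else 0) - (if i = a then δ else 0)
    with hw
  have hwa : w a = ystar a - δ := by simp [hw, if_neg hab]
  have hwb : w b = ystar b + δ := by simp [hw, if_neg (Ne.symm hab)]
  have hpos : ∀ i, 0 ≤ w i := by
    intro i
    by_cases hia : i = a
    · subst hia; rw [hwa]; exact ha0
    · by_cases hib : i = b
      · subst hib; rw [hwb]; have := h0 i; linarith
      · simp [hw, hia, hib]; exact h0 i
  have hsum : ∑ i, w i = 1 := by
    simp only [hw]
    rw [Finset.sum_sub_distrib, Finset.sum_add_distrib, Finset.sum_ite_eq', Finset.sum_ite_eq']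
    simp [h1]
  have hwy : ∑ i, |w i - y i| = ∑ i, |ystar i - y i|
      + (|ystar a - δ - y a| - |ystar a - y a|)
      + (|ystar b + δ - y b| - |ystar b - y b|) := by
    have key : ∀ i, |w i - y i| = |ystar i - y i|
        + (if i = a then |ystar a - δ - y a| - |ystar a - y a| else 0)
        + (if i = b then |ystar b + δ - y b| - |ystar b - y b| else 0) := by
      intro i
      by_cases hia : i = a
      · subst hia; rw [hwa, if_pos rfl, if_neg hab]; ring
      · by_cases hib : i = b
        · subst hib; rw [hwb, if_neg hia, if_pos rfl]; ring
        · have : w i = ystar i := by simp [hw, hia, hib]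
          rw [this, if_neg hia, if_neg hib]; ring
    rw [Finset.sum_congr rfl (fun i _ => key i)]
    rw [Finset.sum_add_distrib, Finset.sum_add_distrib, Finset.sum_ite_eq', Finset.sum_ite_eq']
    simp
  have hL1 : ∑ i, |w i - y i| ≤ ∑ i, |ystar i - y i| := by rw [hwy]; linarith
  have hobj : ∑ i, c i * w i = ∑ i, c i * ystar i + δ * (c b - c a) := by
    have key : ∀ i, c i * w i = c i * ystar i
        + (if i = b then c b * δ else 0) - (if i = a then c a * δ else 0) := by
      intro i
      by_cases hia : i = a
      · subst hia; rw [hwa, if_neg hab, if_pos rfl]; ring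
      · by_cases hib : i = b
        · subst hib; rw [hwb, if_pos rfl, if_neg hia]; ring
        · have : w i = ystar i := by simp [hw, hia, hib]
          rw [this, if_neg hia, if_neg hib]; ring
    rw [Finset.sum_congr rfl (fun i _ => key i)]
    rw [Finset.sum_sub_distrib, Finset.sum_add_distrib, Finset.sum_ite_eq', Finset.sum_ite_eq']
    simp; ring
  have hle := hopt w hpos hsum (by linarith)
  have hgain : 0 < δ * (c b - c a) := mul_pos hδ (by linarith)
  linarith [hobj ▸ hle]

/-- **Lemma 1(c) (Greedy Choice Property).** For the modified gradient redirection
problem, if an optimal solution `y*` has `y*_{s₁} ≠ 0`, then `y*_{s_t} = y_{s_t}`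
for all intermediate indices `t` (i.e. `t ≠ s₁` and `t ≠ sₙ`). -/
theorem greedy_choice_property_c
    (n : ℕ) (hn : 2 ≤ n) (c : Fin n → ℝ)
    (hc : Function.Injective c)
    (s : Equiv.Perm (Fin n))
    (hs : StrictMono (fun t => c (s t)))
    (y : Fin n → ℝ) (hy0 : ∀ i, 0 ≤ y i) (hy1 : ∑ i, y i ≤ 1)
    (ε : ℝ) (hε0 : 0 ≤ ε) (hε2 : ε < 2)
    (ystar : Fin n → ℝ)
    (hfeas : (∀ i, 0 ≤ ystar i) ∧ (∑ i, ystar i = 1) ∧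
      (∑ i, |ystar i - y i|) + (1 - ∑ i, y i) ≤ ε)
    (hopt : ∀ w : Fin n → ℝ, (∀ i, 0 ≤ w i) → (∑ i, w i = 1) →
      (∑ i, |w i - y i|) + (1 - ∑ i, y i) ≤ ε →
      ∑ i, c i * w i ≤ ∑ i, c i * ystar i)
    (hne : ystar (s ⟨0, by omega⟩) ≠ 0) :
    ∀ t : Fin n, t ≠ ⟨0, by omega⟩ → t ≠ ⟨n - 1, by omega⟩ →
      ystar (s t) = y (s t) := by
  obtain ⟨h0, h1, h2⟩ := hfeas
  intro t ht0 htn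
  set i0 : Fin n := ⟨0, by omega⟩ with hi0
  set iN : Fin n := ⟨n - 1, by omega⟩ with hiN
  have ht0' : i0 < t := by
    have : t.val ≠ 0 := fun h => ht0 (Fin.ext h)
    rw [Fin.lt_def]
    have e0 : (i0 : ℕ) = 0 := rfl
    omega
  have htn' : t < iN := by
    have h1 : t.val ≠ n - 1 := fun h => htn (Fin.ext h)
    have h2 := t.isLt
    rw [Fin.lt_def]
    have eN : (iN : ℕ) = n - 1 := rfl
    omega
  by_contra h
  rcases lt_or_gt_of_ne h with hlt | hgt
  · -- ystar (s t) < y (s t): move mass from s i0 to s t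
    have hyst : 0 < ystar (s i0) := (h0 (s i0)).lt_of_ne (Ne.symm hne)
    set δ := min (ystar (s i0)) (y (s t) - ystar (s t)) with hδdef
    have hδpos : 0 < δ := lt_min hyst (by linarith)
    have hδ1 : δ ≤ ystar (s i0) := min_le_left _ _
    have hδ2 : δ ≤ y (s t) - ystar (s t) := min_le_right _ _
    refine perturb_contra c y ystar ε h0 h1 h2 hopt (s i0) (s t)
      (fun h => absurd (s.injective h) ht0'.ne) δ hδpos (hs ht0') (by linarith) ?_
    have e1 : |ystar (s t) + δ - y (s t)| = |ystar (s t) - y (s t)| - δ := by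
      rw [abs_of_nonpos (by linarith), abs_of_nonpos (by linarith)]; ring
    have e2 : |ystar (s i0) - δ - y (s i0)| ≤ |ystar (s i0) - y (s i0)| + δ := by
      calc |ystar (s i0) - δ - y (s i0)| = |(ystar (s i0) - y (s i0)) + (-δ)| := by ring_nf
        _ ≤ |ystar (s i0) - y (s i0)| + |(-δ)| := abs_add_le _ _
        _ = |ystar (s i0) - y (s i0)| + δ := by rw [abs_neg, abs_of_pos hδpos]
    linarith
  · -- ystar (s t) > y (s t): move mass from s t to s iN
    set δ := ystar (s t) - y (s t) with hδdef
    have hδpos : 0 < δ := by linarith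
    refine perturb_contra c y ystar ε h0 h1 h2 hopt (s t) (s iN)
      (fun h => absurd (s.injective h) htn'.ne) δ hδpos (hs htn')
      (by have := hy0 (s t); simp only [hδdef]; linarith) ?_
    have e1 : |ystar (s t) - δ - y (s t)| = 0 := by simp [hδdef]
    have e2 : |ystar (s t) - y (s t)| = δ := by
      rw [abs_of_pos (by linarith)]
    have e3 : |ystar (s iN) + δ - y (s iN)| ≤ |ystar (s iN) - y (s iN)| + δ := by
      calc |ystar (s iN) + δ - y (s iN)| = |(ystar (s iN) - y (s iN)) + δ| := by ring_nf
        _ ≤ |ystar (s iN) - y (s iN)| + |δ| := abs_add_le _ _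
        _ = |ystar (s iN) - y (s iN)| + δ := by rw [abs_of_pos hδpos]
    linarith
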